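/- arXiv:1811.06592 — 2 statements merged into one kernel-verified Lean document; each statement's English description precedes it below -/
import Mathlib

section
/- For all integers i ≥ j ≥ 0, every real α, and every real x, the generalized Laguerre polynomials satisfy the inversion formula Σ_{k=j}^{i} L_{i−k}^{(−α−i−1)}(−x) · L_{k−j}^{(α+j)}(x) = δ_{i,j}, where δ_{i,j} is the Kronecker delta. -/
open scoped BigOperators
open Matrix MeasureTheory

noncomputable section

/-- Pochhammer symbol `(a)_m = a(a+1)⋯(a+m-1)`. -/
def poch (a : ℝ) (m : ℕ) : ℝ := ∏ i ∈ Finset.range m, (a + i)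

/-- Generalized Laguerre polynomial `L_n^{(α)}(x)`. -/
def lagP (α : ℝ) (n : ℕ) (x : ℝ) : ℝ :=
  ∑ k ∈ Finset.range (n + 1),
    (-1 : ℝ) ^ k * poch (α + k + 1) (n - k) * x ^ k / ((n - k).factorial * k.factorial)

/-- The matrix `L_μ^{(α)}(x)`; the 0-based index pair `(i,j)` corresponds to the
1-based index pair `(i+1, j+1)` of the paper. -/
def LagMat (N : ℕ) (μ : Fin N → ℝ) (α : ℝ) (x : ℝ) : Matrix (Fin N) (Fin N) ℝ :=
  Matrix.of fun m n : Fin N =>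
    if (n : ℕ) ≤ (m : ℕ) then μ m / μ n * lagP (α + (n : ℕ) + 1) ((m : ℕ) - (n : ℕ)) x else 0

/-- The matrix `A_μ = S_μ A S_μ⁻¹`, written entrywise. -/
def AmuMat (N : ℕ) (μ : Fin N → ℝ) : Matrix (Fin N) (Fin N) ℝ :=
  Matrix.of fun i j : Fin N => if (i : ℕ) = (j : ℕ) + 1 then -(μ i / μ j) else 0

/-- `J = diag(1,…,N)`. -/
def Jmat (N : ℕ) : Matrix (Fin N) (Fin N) ℝ :=
  Matrix.diagonal fun i => ((i : ℕ) + 1 : ℝ)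

/-- `T^{(ν)}(x) = e^{-x} Σ_k δ_k x^{ν+k} E_{k,k}`. -/
def Tmat (N : ℕ) (δ : Fin N → ℝ) (ν : ℝ) (x : ℝ) : Matrix (Fin N) (Fin N) ℝ :=
  Matrix.diagonal fun k => Real.exp (-x) * δ k * x ^ (ν + (k : ℕ) + 1)

/-- The weight `W_μ^{(α,ν)}(x) = L_μ^{(α)}(x) T^{(ν)}(x) L_μ^{(α)}(x)^*`. -/
def Wmat (N : ℕ) (μ δ : Fin N → ℝ) (α ν : ℝ) (x : ℝ) : Matrix (Fin N) (Fin N) ℝ :=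
  LagMat N μ α x * Tmat N δ ν x * (LagMat N μ α x)ᵀ

/-- Entrywise evaluation of a matrix of polynomials. -/
def matPolyEval {N : ℕ} (P : Matrix (Fin N) (Fin N) (Polynomial ℝ)) (x : ℝ) :
    Matrix (Fin N) (Fin N) ℝ :=
  Matrix.of fun i j => (P i j).eval x

/-- Entrywise derivative of a matrix of polynomials. -/
def matPolyDeriv {N : ℕ} (P : Matrix (Fin N) (Fin N) (Polynomial ℝ)) :
    Matrix (Fin N) (Fin N) (Polynomial ℝ) :=
  Matrix.of fun i j => Polynomial.derivative (P i j)

/-- `P` is the monic (matrix valued) orthogonal polynomial of degree `n` w.r.t. the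
weight `W` on `(0,∞)`. -/
def MonicOrth (N : ℕ) (W : ℝ → Matrix (Fin N) (Fin N) ℝ) (n : ℕ)
    (P : Matrix (Fin N) (Fin N) (Polynomial ℝ)) : Prop :=
  (∀ i j, (P i j).degree ≤ n) ∧
  Matrix.of (fun i j => (P i j).coeff n) = (1 : Matrix (Fin N) (Fin N) ℝ) ∧
  ∀ k, k < n → ∀ i j, (∫ x in Set.Ioi (0 : ℝ), (matPolyEval P x * W x) i j * x ^ k) = 0

/-- Conditions (C1) and (C2) at level `ν`, relating `δ = δ^{(ν)}`, `δ' = δ^{(ν+1)}`,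
`c = c^{(ν)}` and `d = d^{(ν)}`. -/
def PearsonCond (N : ℕ) (μ δ δ' : Fin N → ℝ) (c d : ℝ) : Prop :=
  0 < c ∧ 0 < d ∧
  (∀ k : Fin N, δ' k = (((k : ℕ) + 1) * d + c) * δ k) ∧
  ∀ (k : Fin N) (h : (k : ℕ) + 1 < N),
    μ ⟨(k : ℕ) + 1, h⟩ ^ 2 / μ k ^ 2 =
      d * ((k : ℕ) + 1) * ((N : ℝ) - ((k : ℕ) + 1)) * δ ⟨(k : ℕ) + 1, h⟩ / δ' k

/-- `Φ^{(α,ν)}(x)` (with `c = c^{(ν)}`, `d = d^{(ν)}`). -/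
def PhiMat (N : ℕ) (μ : Fin N → ℝ) (α c d : ℝ) (x : ℝ) : Matrix (Fin N) (Fin N) ℝ :=
  ((LagMat N μ α 0)ᵀ)⁻¹ *
    (-(d * x ^ 2) • (AmuMat N μ)ᵀ + x • (d • Jmat N + c • (1 : Matrix (Fin N) (Fin N) ℝ))) *
    (LagMat N μ α 0)ᵀ

/-- `Ψ^{(α,ν)}(x)` (with `δ = δ^{(ν)}`, `δ' = δ^{(ν+1)}`, `c = c^{(ν)}`, `d = d^{(ν)}`). -/
def PsiMat (N : ℕ) (μ δ δ' : Fin N → ℝ) (α ν c d : ℝ) (x : ℝ) : Matrix (Fin N) (Fin N) ℝ :=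
  ((LagMat N μ α 0)ᵀ)⁻¹ *
    (x • (d • (Jmat N - (AmuMat N μ)ᵀ * (Jmat N + (ν + 1) • (1 : Matrix (Fin N) (Fin N) ℝ)) -
        ((N : ℝ) + 1) • (1 : Matrix (Fin N) (Fin N) ℝ)) - c • (1 : Matrix (Fin N) (Fin N) ℝ)) +
      (Jmat N + (ν + 1) • (1 : Matrix (Fin N) (Fin N) ℝ)) *
        (d • Jmat N + c • (1 : Matrix (Fin N) (Fin N) ℝ)) +
      (Matrix.diagonal δ)⁻¹ * AmuMat N μ * Matrix.diagonal δ') *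
    (LagMat N μ α 0)ᵀ

/-- `K_n^{(β,ν)}` (with `c = c^{(ν)}`, `d = d^{(ν)}`). -/
def Kmat (N : ℕ) (μ : Fin N → ℝ) (β ν c d : ℝ) (n : ℕ) : Matrix (Fin N) (Fin N) ℝ :=
  LagMat N μ β 0 *
    (d • (Jmat N - (Jmat N + (ν + n) • (1 : Matrix (Fin N) (Fin N) ℝ)) * AmuMat N μ -
      ((N : ℝ) + 1) • (1 : Matrix (Fin N) (Fin N) ℝ)) - c • (1 : Matrix (Fin N) (Fin N) ℝ)) *
    (LagMat N μ β 0)⁻¹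

/-- `(Q D^{(α,ν)})(x)` for a matrix valued polynomial `Q`. -/
def Dapply (N : ℕ) (μ : Fin N → ℝ) (α ν : ℝ)
    (Q : Matrix (Fin N) (Fin N) (Polynomial ℝ)) (x : ℝ) : Matrix (Fin N) (Fin N) ℝ :=
  x • matPolyEval (matPolyDeriv (matPolyDeriv Q)) x +
    matPolyEval (matPolyDeriv Q) x *
      ((-x) • (AmuMat N μ + 1)⁻¹ + (ν + 1) • (1 : Matrix (Fin N) (Fin N) ℝ) + Jmat N +
        (α • (1 : Matrix (Fin N) (Fin N) ℝ) + Jmat N) * AmuMat N μ) +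
    matPolyEval Q x * ((α - ν) • (AmuMat N μ + 1)⁻¹ - Jmat N)

/-!
Writing `L_n^{(α)}(x) = Σ_{k+r=n} (-x)^k/k! · multichoose(α+k+1, r)`, the Chu–Vandermonde
identity for `multichoose` and the binomial theorem give the addition formula
`Σ_{p+q=m} L_p^{(A)}(x) L_q^{(B)}(y) = L_m^{(A+B+1)}(x+y)`. For `A = -α-i-1`, `B = α+j` and
`y = -x` the inversion sum becomes `L_{i-j}^{(j-i)}(0) = multichoose(j-i+1, i-j)`, which vanishes
for `i > j` because its ascending product passes through `0`.
-/

open Finset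

theorem Ring.multichoose_add {R : Type*} [CommRing R] [BinomialRing R] (r s : R) (k : ℕ) :
    Ring.multichoose (r + s) k =
      ∑ ij ∈ antidiagonal k, Ring.multichoose r ij.1 * Ring.multichoose s ij.2 := by
  have hneg (t : R) (n : ℕ) : Ring.multichoose t n = (-1) ^ n * Ring.choose (-t) n := by
    rw [Ring.choose_neg', Units.smul_def, Int.coe_negOnePow_natCast, zsmul_eq_mul]
    push_cast
    rw [← mul_assoc, ← mul_pow, neg_one_mul, neg_neg, one_pow, one_mul]
  rw [hneg, neg_add, Ring.add_choose_eq k (Commute.all _ _), mul_sum]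
  refine sum_congr rfl fun ij hij => ?_
  rw [hneg, hneg, ← mem_antidiagonal.mp hij, pow_add]
  ring

theorem add_pow_div_factorial {K : Type*} [Field K] [CharZero K] (x y : K) (n : ℕ) :
    (x + y) ^ n / n.factorial =
      ∑ p ∈ antidiagonal n, x ^ p.1 / p.1.factorial * (y ^ p.2 / p.2.factorial) := by
  rw [(Commute.all x y).add_pow', sum_div]
  refine sum_congr rfl fun p hp => ?_
  have := (Nat.factorial_pos (p.1 + p.2)).ne'
  rw [← mem_antidiagonal.mp hp, nsmul_eq_mul, Nat.cast_add_choose]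
  field_simp

theorem sum_antidiagonal_antidiagonal_transpose {M : Type*} [AddCommMonoid M]
    (f : ℕ → ℕ → ℕ → ℕ → M) (m : ℕ) :
    ∑ p ∈ antidiagonal m, ∑ a ∈ antidiagonal p.1, ∑ b ∈ antidiagonal p.2, f a.1 a.2 b.1 b.2 =
      ∑ p ∈ antidiagonal m, ∑ a ∈ antidiagonal p.1, ∑ b ∈ antidiagonal p.2, f a.1 b.1 a.2 b.2 := by
  simp only [sum_sigma']
  -- Both sides sum over the 2×2 arrays with entry sum `m`; `τ` transposes the array.
  let τ : (Σ _ : ℕ × ℕ, Σ _ : ℕ × ℕ, ℕ × ℕ) → (Σ _ : ℕ × ℕ, Σ _ : ℕ × ℕ, ℕ × ℕ) :=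
    fun ⟨_, a, b⟩ => ⟨(a.1 + b.1, a.2 + b.2), (a.1, b.1), (a.2, b.2)⟩
  refine sum_nbij' τ τ ?_ ?_ ?_ ?_ fun _ _ => rfl
  all_goals
    rintro ⟨⟨_, _⟩, ⟨_, _⟩, ⟨_, _⟩⟩ h
    simp_all [τ] <;> omega

theorem poch_eq_ascPochhammer_eval (a : ℝ) (m : ℕ) : poch a m = (ascPochhammer ℝ m).eval a := by
  induction m with
  | zero => simp [poch]
  | succ m ih => rw [poch, prod_range_succ, ← poch, ih, ascPochhammer_succ_eval]

theorem poch_div_factorial (a : ℝ) (m : ℕ) : poch a m / m.factorial = Ring.multichoose a m := by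
  rw [poch_eq_ascPochhammer_eval, ← Polynomial.ascPochhammer_smeval_eq_eval,
    ← Ring.factorial_nsmul_multichoose_eq_ascPochhammer, nsmul_eq_mul,
    mul_div_cancel_left₀ _ (Nat.cast_ne_zero.2 (Nat.factorial_ne_zero m))]

theorem lagP_eq_sum_antidiagonal (α : ℝ) (n : ℕ) (x : ℝ) :
    lagP α n x = ∑ p ∈ antidiagonal n,
      (-x) ^ p.1 / p.1.factorial * Ring.multichoose (α + p.1 + 1) p.2 := by
  rw [lagP, Finset.Nat.sum_antidiagonal_eq_sum_range_succ_mk]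
  refine sum_congr rfl fun k _ => ?_
  rw [← poch_div_factorial, neg_pow]
  ring

theorem lagP_zero_right (α : ℝ) (n : ℕ) : lagP α n 0 = Ring.multichoose (α + 1) n := by
  rw [lagP_eq_sum_antidiagonal, sum_eq_single (0, n)]
  · simp
  · rintro ⟨k, r⟩ hkr hne
    have hk : k ≠ 0 := by rintro rfl; simp_all
    simp [hk]
  · simp

theorem lagP_neg_self_zero (n : ℕ) : lagP (-n) n 0 = if n = 0 then 1 else 0 := by
  rw [lagP_zero_right]
  cases n with
  | zero => simp
  | succ n =>
    rw [if_neg n.succ_ne_zero, Nat.cast_succ, neg_add, neg_add_cancel_right,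
      Ring.multichoose_succ_neg_natCast]

theorem lagP_add (A B x y : ℝ) (m : ℕ) :
    ∑ p ∈ antidiagonal m, lagP A p.1 x * lagP B p.2 y = lagP (A + B + 1) m (x + y) := by
  have hinner (c w : ℕ) :
      ∑ a ∈ antidiagonal c, ∑ b ∈ antidiagonal w,
        (-x) ^ a.1 / a.1.factorial * Ring.multichoose (A + a.1 + 1) b.1 *
          ((-y) ^ a.2 / a.2.factorial * Ring.multichoose (B + a.2 + 1) b.2) =
        (-(x + y)) ^ c / c.factorial * Ring.multichoose (A + B + 1 + c + 1) w := by
    rw [neg_add, add_pow_div_factorial, sum_mul]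
    refine sum_congr rfl fun a ha => ?_
    have hsplit : A + B + 1 + c + 1 = (A + a.1 + 1) + (B + a.2 + 1) := by
      rw [← mem_antidiagonal.mp ha]; push_cast; ring
    rw [hsplit, Ring.multichoose_add, mul_sum]
    exact sum_congr rfl fun b _ => by ring
  simp only [lagP_eq_sum_antidiagonal, sum_mul_sum]
  rw [sum_antidiagonal_antidiagonal_transpose (fun k r l s =>
    (-x) ^ k / k.factorial * Ring.multichoose (A + k + 1) r *
      ((-y) ^ l / l.factorial * Ring.multichoose (B + l + 1) s))]
  exact sum_congr rfl fun p _ => hinner p.1 p.2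

theorem sum_Icc_eq_sum_antidiagonal {M : Type*} [AddCommMonoid M] (f : ℕ → ℕ → M) {i j : ℕ}
    (hij : j ≤ i) : ∑ k ∈ Icc j i, f (i - k) (k - j) = ∑ p ∈ antidiagonal (i - j), f p.1 p.2 := by
  refine sum_nbij' (fun k => (i - k, k - j)) (fun p => j + p.2) ?_ ?_ ?_ ?_ fun _ _ => rfl
  all_goals
    intro _ h
    simp_all [Prod.ext_iff] <;> omega

/-- the inversion formula for generalized Laguerre polynomials. -/
theorem laguerre_inversion (i j : ℕ) (hij : j ≤ i) (α x : ℝ) :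
    ∑ k ∈ Finset.Icc j i, lagP (-α - i - 1) (i - k) (-x) * lagP (α + j) (k - j) x
      = if i = j then 1 else 0 := by
  have hparam : -α - i - 1 + (α + j) + 1 = -((i - j : ℕ) : ℝ) := by
    push_cast [Nat.cast_sub hij]; ring
  rw [sum_Icc_eq_sum_antidiagonal (fun a b => lagP (-α - i - 1) a (-x) * lagP (α + j) b x) hij,
    lagP_add, hparam, neg_add_cancel, lagP_neg_self_zero]
  exact if_congr (by omega) rfl rfl
end
end

section
/- For every real x, the entrywise derivative of the matrix function L_μ^{(α)} satisfies (d/dx) L_μ^{(α)}(x) = L_μ^{(α)}(x) · A_μ, and consequently L_μ^{(α)}(x) = L_μ^{(α)}(0) · exp(x A_μ), where exp denotes the matrix exponential. -/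
open scoped BigOperators
open Matrix MeasureTheory

noncomputable section

/-! Differentiating the defining sum termwise gives `(L_{n+1}^{(β)})' = -L_n^{(β+1)}`, which is the
entrywise form of `L' = L A_μ`. Then `L(x) exp(-x A_μ)` has derivative zero, hence equals `L(0)`. -/

theorem lagP_zero (β x : ℝ) : lagP β 0 x = 1 := by
  simp [lagP, poch]

theorem hasDerivAt_lagP_succ (β : ℝ) (n : ℕ) (x : ℝ) :
    HasDerivAt (lagP β (n + 1)) (-lagP (β + 1) n x) x := by
  have h : HasDerivAt (lagP β (n + 1)) (∑ k ∈ Finset.range (n + 1 + 1),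
      (-1 : ℝ) ^ k * poch (β + k + 1) (n + 1 - k) * (k * x ^ (k - 1)) /
        ((n + 1 - k).factorial * k.factorial)) x :=
    HasDerivAt.fun_sum fun k _ =>
      ((hasDerivAt_pow k x).const_mul ((-1 : ℝ) ^ k * poch (β + k + 1) (n + 1 - k))).div_const _
  refine h.congr_deriv ?_
  rw [Finset.sum_range_succ', lagP, ← Finset.sum_neg_distrib]
  simp only [CharP.cast_eq_zero, zero_mul, mul_zero, zero_div, add_zero]
  refine Finset.sum_congr rfl fun k _ => ?_
  rw [Nat.add_sub_add_right, Nat.factorial_succ]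
  push_cast
  field_simp
  rw [show β + (k + 1 : ℝ) + 1 = β + 1 + k + 1 by ring]
  ring

theorem LagMat_apply_of_lt {N : ℕ} (μ : Fin N → ℝ) (α x : ℝ) {i j : Fin N} (h : i < j) :
    LagMat N μ α x i j = 0 :=
  if_neg (Fin.not_le.2 h)

theorem AmuMat_apply_of_ne {N : ℕ} (μ : Fin N → ℝ) {i j : Fin N} (h : (i : ℕ) ≠ j + 1) :
    AmuMat N μ i j = 0 :=
  if_neg h

theorem hasDerivAt_LagMat_apply {N : ℕ} {μ : Fin N → ℝ} (hμ : ∀ k, μ k ≠ 0) (α x : ℝ)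
    (i j : Fin N) :
    HasDerivAt (fun t => LagMat N μ α t i j) ((LagMat N μ α x * AmuMat N μ) i j) x := by
  rw [mul_apply]
  by_cases hji : j < i
  · have hj : (j : ℕ) + 1 < N := by omega
    rw [Finset.sum_eq_single ⟨j + 1, hj⟩ (fun l _ hl => by
      rw [AmuMat_apply_of_ne μ (fun h => hl (Fin.ext h)), mul_zero]) (by simp)]
    obtain ⟨d, hd⟩ : ∃ d, (i : ℕ) - j = d + 1 := ⟨i - j - 1, by omega⟩
    have hL : (fun t => LagMat N μ α t i j) = fun t => μ i / μ j * lagP (α + j + 1) (d + 1) t := by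
      ext t; simp [LagMat, hji.le, hd]
    rw [hL]
    refine ((hasDerivAt_lagP_succ (α + j + 1) d x).const_mul (μ i / μ j)).congr_deriv ?_
    simp only [LagMat, AmuMat, of_apply, if_true]
    rw [if_pos (by omega), show (i : ℕ) - (j + 1) = d by omega]
    push_cast
    rw [← add_assoc α]
    field_simp [hμ ⟨j + 1, hj⟩]
  · have hL : (fun t => LagMat N μ α t i j) = fun _ => LagMat N μ α 0 i j := by
      ext t
      simp [LagMat, show (i : ℕ) - j = 0 by omega, lagP_zero]
    rw [hL, Finset.sum_eq_zero fun k _ => ?_]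
    · exact hasDerivAt_const x _
    by_cases hk : (k : ℕ) = j + 1
    · rw [LagMat_apply_of_lt μ α x (by omega), zero_mul]
    · rw [AmuMat_apply_of_ne μ hk, mul_zero]

open NormedSpace in
theorem eq_mul_exp_smul_of_hasDerivAt {𝕂 𝔸 : Type*} [RCLike 𝕂] [NormedRing 𝔸] [NormedAlgebra 𝕂 𝔸]
    [CompleteSpace 𝔸] {F : 𝕂 → 𝔸} {A : 𝔸} (hF : ∀ t, HasDerivAt F (F t * A) t) (x : 𝕂) :
    F x = F 0 * exp (x • A) := by
  have hG : ∀ t, HasDerivAt (fun t => F t * exp (t • -A)) 0 t := fun t => by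
    convert (hF t).fun_mul (hasDerivAt_exp_smul_const' (-A) t) using 1
    noncomm_ring
  have hGx : F x * exp (x • -A) = F 0 := by
    simpa using is_const_of_deriv_eq_zero (fun t => (hG t).differentiableAt)
      (fun t => (hG t).deriv) x 0
  have hmem (B : 𝔸) : B ∈ Metric.eball 0 (expSeries 𝕂 𝔸).radius := by
    simp [expSeries_radius_eq_top]
  have hcomm : Commute (x • -A) (x • A) := ((Commute.refl A).neg_left.smul_left x).smul_right x
  rw [← hGx, mul_assoc, ← exp_add_of_commute_of_mem_ball hcomm (hmem _) (hmem _), smul_neg,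
    neg_add_cancel, exp_zero, mul_one]

theorem Matrix.eq_mul_exp_smul_of_hasDerivAt_apply {n : Type*} [Fintype n] [DecidableEq n]
    {F : ℝ → Matrix n n ℝ} {A : Matrix n n ℝ}
    (hF : ∀ t i j, HasDerivAt (fun t => F t i j) ((F t * A) i j) t) (x : ℝ) :
    F x = F 0 * NormedSpace.exp (x • A) := by
  -- `HasDerivAt` depends only on the topology, which this operator norm shares with the sup norm.
  let _ : NormedRing (Matrix n n ℝ) := Matrix.linftyOpNormedRing
  let _ : NormedAlgebra ℝ (Matrix n n ℝ) := Matrix.linftyOpNormedAlgebra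
  exact eq_mul_exp_smul_of_hasDerivAt (fun t => hasDerivAt_pi.2 fun i => hasDerivAt_pi.2 (hF t i)) x

theorem LagMat_deriv_and_exp_general (N : ℕ) (μ : Fin N → ℝ) (hμ : ∀ k, μ k ≠ 0)
    (α x : ℝ) :
    (∀ i j : Fin N,
      HasDerivAt (fun t => LagMat N μ α t i j) ((LagMat N μ α x * AmuMat N μ) i j) x) ∧
    LagMat N μ α x = LagMat N μ α 0 * NormedSpace.exp (x • AmuMat N μ) :=
  ⟨hasDerivAt_LagMat_apply hμ α x,
    Matrix.eq_mul_exp_smul_of_hasDerivAt_apply (fun t => hasDerivAt_LagMat_apply hμ α t) x⟩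

/-- derivative of `L_μ^{(α)}` and its matrix-exponential form. -/
theorem LagMat_deriv_and_exp (N : ℕ) (hN : 1 ≤ N) (μ : Fin N → ℝ) (hμ : ∀ k, μ k ≠ 0)
    (α x : ℝ) :
    (∀ i j : Fin N,
      HasDerivAt (fun t => LagMat N μ α t i j) ((LagMat N μ α x * AmuMat N μ) i j) x) ∧
    LagMat N μ α x = LagMat N μ α 0 * NormedSpace.exp (x • AmuMat N μ) :=
  LagMat_deriv_and_exp_general N μ hμ α x
end
end
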